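/- arXiv:1808.07600 — 5 statements merged into one kernel-verified Lean document; each statement's English description precedes it below -/
import Mathlib

section
/- Let p be an integer-valued supermodular set-function on the subsets of a nonempty finite set S with p(∅) = 0, assume Ḃ(p) is nonempty, and let Φ : ℤ^S → ℝ be a symmetric strictly convex function. Then an element m of Ḃ(p) minimizes Φ over Ḃ(p) if and only if m is a decreasingly minimal element of Ḃ(p). -/
/-!
A Φ-minimizer `m` admits no 1-tightening step: if `m t + 2 ≤ m s`, then `m - χ_s + χ_t` is a
proper convex combination of `m` and the permuted vector `m ∘ (s t)`, so by symmetry and strict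
convexity it has smaller Φ-value, hence lies outside `Ḃ(p)`. Conversely, an element without
1-tightening steps is dec-min: take `z ∈ Ḃ(p)` with `z <_dec m` closest to `m` in `ℓ₁`, and `s`
maximizing `z` among `{m < z}`. The exchange property of `Ḃ(p)` (from the minimal `z`-tight set
containing `s`) gives `t` with `z t < m t` and `z - χ_s + χ_t ∈ Ḃ(p)`. If `z t < z s`, this new
vector is still `<_dec m` and closer to `m`; otherwise, exchanging from `m` at `t` yields a
1-tightening step of `m`. Since `Ḃ(p)` is finite a Φ-minimizer exists; it is dec-min, so it has
the same sorted values as any dec-min element, which is thus a permutation of it.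
-/

open Finset

variable {α : Type*}

/-- Integer-valued supermodular set-function. -/
def Supermodular [DecidableEq α] (p : Finset α → ℤ) : Prop :=
  ∀ X Y : Finset α, p X + p Y ≤ p (X ∩ Y) + p (X ∪ Y)

/-- The M-convex set `Ḃ(p)` of integral elements of the base-polyhedron `B'(p)`:
all `m : α → ℤ` with `m̃(X) ≥ p(X)` for every `X` and `m̃(S) = p(S)`. -/
def Bdot [Fintype α] (p : Finset α → ℤ) : Set (α → ℤ) :=
  {m | (∀ X : Finset α, p X ≤ ∑ s ∈ X, m s) ∧ (∑ s, m s) = p Finset.univ}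

/-- `x↓`: the values of `x` arranged in nonincreasing order. -/
def sortedDesc [Fintype α] (x : α → ℤ) : List ℤ :=
  ((Finset.univ.val.map x).sort (· ≤ ·)).reverse

/-- `x↑`: the values of `x` arranged in nondecreasing order. -/
def sortedAsc [Fintype α] (x : α → ℤ) : List ℤ :=
  (Finset.univ.val.map x).sort (· ≤ ·)

/-- `x ≤_dec y`: `x↓` is lexicographically less than or equal to `y↓`. -/
def DecLE [Fintype α] (x y : α → ℤ) : Prop :=
  sortedDesc x = sortedDesc y ∨ List.Lex (· < ·) (sortedDesc x) (sortedDesc y)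

/-- `x ≤_inc y`: `x↑` is lexicographically less than or equal to `y↑`. -/
def IncLE [Fintype α] (x y : α → ℤ) : Prop :=
  sortedAsc x = sortedAsc y ∨ List.Lex (· < ·) (sortedAsc x) (sortedAsc y)

/-- `m` is a decreasingly minimal element of `Bdot p`. -/
def DecMin [Fintype α] (p : Finset α → ℤ) (m : α → ℤ) : Prop :=
  m ∈ Bdot p ∧ ∀ y ∈ Bdot p, DecLE m y

theorem List.lex_cons_of_forall_lt {β : Type*} [LT β] {l l' : List β} {a : β}
    (h : ∀ x ∈ l, x < a) : List.Lex (· < ·) l (a :: l') := by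
  cases l with
  | nil => exact .nil
  | cons x l => exact .rel (h x List.mem_cons_self)

theorem Multiset.sort_ge_eq_reverse {β : Type*} [LinearOrder β] (M : Multiset β) :
    M.sort (· ≥ ·) = (M.sort (· ≤ ·)).reverse :=
  List.Perm.eq_of_pairwise' (r := (· ≥ ·)) (Multiset.pairwise_sort _ _)
    (List.pairwise_reverse.2 (Multiset.pairwise_sort _ _))
    (by rw [← Multiset.coe_eq_coe, Multiset.sort_eq, Multiset.coe_reverse, Multiset.sort_eq])

theorem Multiset.sort_ge_add_lt_sort_ge_add {β : Type*} [LinearOrder β] {A A' : Multiset β}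
    {a : β} (ha : a ∈ A) (hA : ∀ x ∈ A, x ≤ a) (hA' : ∀ x ∈ A', x < a) (R : Multiset β) :
    (A' + R).sort (· ≥ ·) < (A + R).sort (· ≥ ·) := by
  induction R using Multiset.strongInductionOn with
  | ih R IH =>
  by_cases hR : ∀ x ∈ R, x < a
  · obtain ⟨A₀, rfl⟩ := Multiset.exists_cons_of_mem ha
    rw [Multiset.cons_add, Multiset.sort_cons]
    · refine List.lex_cons_of_forall_lt fun x hx => ?_
      rcases Multiset.mem_add.1 ((Multiset.mem_sort _).1 hx) with hx | hx
      exacts [hA' x hx, hR x hx]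
    · intro x hx
      rcases Multiset.mem_add.1 hx with hx | hx
      exacts [hA x (Multiset.mem_cons_of_mem hx), (hR x hx).le]
  obtain ⟨x, hxR, hax⟩ := not_forall₂.1 hR
  obtain ⟨c, hcR, hc⟩ := R.toFinset.exists_max_image id ⟨x, Multiset.mem_toFinset.2 hxR⟩
  simp only [Multiset.mem_toFinset, id] at hcR hc
  obtain ⟨R', rfl⟩ := Multiset.exists_cons_of_mem hcR
  have hsort : ∀ B : Multiset β, (∀ y ∈ B, y ≤ c) →
      (B + c ::ₘ R').sort (· ≥ ·) = c :: (B + R').sort (· ≥ ·) := by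
    intro B hB
    rw [Multiset.add_cons]
    refine Multiset.sort_cons _ _ _ fun y hy => ?_
    rcases Multiset.mem_add.1 hy with hy | hy
    exacts [hB y hy, hc y (Multiset.mem_cons_of_mem hy)]
  have hac : a ≤ c := (not_lt.1 hax).trans (hc x hxR)
  rw [hsort A fun y hy => (hA y hy).trans hac, hsort A' fun y hy => (hA' y hy).le.trans hac]
  exact List.Lex.cons (IH R' (Multiset.lt_cons_self R' c))

theorem exists_perm_comp_eq_of_map_univ_eq [Fintype α] {β : Type*} [DecidableEq β]
    {x y : α → β} (h : univ.val.map x = univ.val.map y) : ∃ σ : Equiv.Perm α, y ∘ σ = x := by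
  have hfiber (c : β) : Fintype.card {a // x a = c} = Fintype.card {a // y a = c} := by
    simpa [Fintype.card_subtype, Multiset.count_map, eq_comm, card_def, filter_val] using
      congrArg (Multiset.count c) h
  exact ⟨Equiv.ofFiberEquiv fun c => Fintype.equivOfCardEq (hfiber c),
    funext (Equiv.ofFiberEquiv_map _)⟩

theorem sortedDesc_eq_sort [Fintype α] (x : α → ℤ) :
    sortedDesc x = (univ.val.map x).sort (· ≥ ·) :=
  (Multiset.sort_ge_eq_reverse _).symm

theorem decLE_iff_le [Fintype α] {x y : α → ℤ} : DecLE x y ↔ sortedDesc x ≤ sortedDesc y := by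
  rw [DecLE, le_iff_eq_or_lt]; rfl

theorem map_univ_eq_of_sortedDesc_eq [Fintype α] {x y : α → ℤ}
    (h : sortedDesc x = sortedDesc y) : univ.val.map x = univ.val.map y := by
  rw [sortedDesc_eq_sort, sortedDesc_eq_sort] at h
  rw [← Multiset.sort_eq (univ.val.map x) (· ≥ ·), h, Multiset.sort_eq]

section Transfer

variable [DecidableEq α]

def transfer (y : α → ℤ) (s t : α) : α → ℤ := y - Pi.single s 1 + Pi.single t 1

theorem transfer_apply (y : α → ℤ) (s t u : α) :
    transfer y s t u = y u - (if u = s then 1 else 0) + (if u = t then 1 else 0) := by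
  simp [transfer, Pi.single_apply]

theorem sum_transfer (y : α → ℤ) (s t : α) (X : Finset α) :
    ∑ u ∈ X, transfer y s t u =
      ∑ u ∈ X, y u - (if s ∈ X then 1 else 0) + (if t ∈ X then 1 else 0) := by
  simp only [transfer_apply, sum_add_distrib, sum_sub_distrib, sum_ite_eq']

variable [Fintype α]

theorem map_univ_transfer (y : α → ℤ) {s t : α} (hst : s ≠ t) :
    ∃ R : Multiset ℤ, univ.val.map y = y s ::ₘ y t ::ₘ R ∧
      univ.val.map (transfer y s t) = (y s - 1) ::ₘ (y t + 1) ::ₘ R := by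
  have huniv : (univ : Finset α).val = s ::ₘ t ::ₘ ((univ.erase s).erase t).val := by
    rw [erase_val, erase_val, Multiset.cons_erase ((Multiset.mem_erase_of_ne hst.symm).2
      (mem_univ_val t)), Multiset.cons_erase (mem_univ_val s)]
  refine ⟨((univ.erase s).erase t).val.map y, by rw [huniv, Multiset.map_cons, Multiset.map_cons],
    ?_⟩
  rw [huniv, Multiset.map_cons, Multiset.map_cons]
  congr 2
  · simp [transfer_apply, hst]
  · simp [transfer_apply, hst.symm]
  · refine Multiset.map_congr rfl fun u hu => ?_
    obtain ⟨hut, hus, -⟩ : u ≠ t ∧ u ≠ s ∧ u ∈ univ := by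
      simpa only [mem_erase, mem_val] using hu
    simp [transfer_apply, hut, hus]

theorem sortedDesc_transfer_le (y : α → ℤ) {s t : α} (hst : s ≠ t) (h : y t + 1 ≤ y s) :
    sortedDesc (transfer y s t) ≤ sortedDesc y := by
  obtain ⟨R, hy, hy'⟩ := map_univ_transfer y hst
  rw [sortedDesc_eq_sort, sortedDesc_eq_sort, hy, hy']
  rcases h.lt_or_eq with h | h
  · have hlt := Multiset.sort_ge_add_lt_sort_ge_add (A := {y s, y t}) (A' := {y s - 1, y t + 1})
      (a := y s) (by simp) (by simp; omega) (by simp; omega) R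
    simpa using hlt.le
  · rw [← h, add_sub_cancel_right, Multiset.cons_swap]

theorem sum_natAbs_transfer_lt {m y : α → ℤ} {s t : α} (hs : m s < y s) (ht : y t < m t) :
    ∑ u, (transfer y s t u - m u).natAbs < ∑ u, (y u - m u).natAbs := by
  have hst : s ≠ t := by rintro rfl; omega
  refine sum_lt_sum (fun u _ => ?_) ⟨s, mem_univ s, ?_⟩
  · rw [transfer_apply]
    split_ifs <;> subst_vars <;> omega
  · rw [transfer_apply, if_pos rfl, if_neg hst]
    omega

end Transfer

namespace Bdot

variable [Fintype α]

theorem exists_lt_of_ne {p : Finset α → ℤ} {m y : α → ℤ} (hm : m ∈ Bdot p) (hy : y ∈ Bdot p)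
    (hne : y ≠ m) : ∃ s, m s < y s := by
  by_contra! hle
  refine hne (funext fun u => ?_)
  have hsum : ∑ u, y u = ∑ u, m u := by rw [hy.2, hm.2]
  exact (sum_eq_sum_iff_of_le fun u _ => hle u).1 hsum u (mem_univ u)

variable [DecidableEq α]

theorem finite (p : Finset α → ℤ) : (Bdot p).Finite := by
  refine (Set.finite_Icc (fun s => p {s}) (fun s => p univ - p (univ.erase s))).subset ?_
  intro y ⟨hlow, hsum⟩
  refine ⟨fun s => by simpa using hlow {s}, fun s => ?_⟩
  have hs := hlow (univ.erase s)
  have hsplit := add_sum_erase univ y (mem_univ s)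
  dsimp only
  omega

variable {p : Finset α → ℤ}

theorem transfer_mem {y : α → ℤ} (hy : y ∈ Bdot p) {s t : α}
    (hslack : ∀ X : Finset α, s ∈ X → t ∉ X → p X < ∑ u ∈ X, y u) :
    transfer y s t ∈ Bdot p := by
  refine ⟨fun X => ?_, ?_⟩
  · have hX := hy.1 X
    rw [sum_transfer]
    by_cases hs : s ∈ X <;> by_cases ht : t ∈ X <;> simp only [hs, ht, if_true, if_false]
    · omega
    · have := hslack X hs ht; omega
    · omega
    · omega
  · simp [sum_transfer, hy.2]

theorem tight_inter (hp : Supermodular p) {m : α → ℤ} (hm : m ∈ Bdot p) {X Y : Finset α}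
    (hX : ∑ u ∈ X, m u = p X) (hY : ∑ u ∈ Y, m u = p Y) : ∑ u ∈ X ∩ Y, m u = p (X ∩ Y) := by
  have hsub := hp X Y
  have hinter := hm.1 (X ∩ Y)
  have hunion := hm.1 (X ∪ Y)
  have hmod := sum_union_inter (s₁ := X) (s₂ := Y) (f := m)
  omega

theorem exists_minimal_tight (hp : Supermodular p) {m : α → ℤ} (hm : m ∈ Bdot p) (s : α) :
    ∃ T : Finset α, ∑ u ∈ T, m u = p T ∧ s ∈ T ∧
      ∀ X : Finset α, ∑ u ∈ X, m u = p X → s ∈ X → T ⊆ X := by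
  let tight := univ.filter fun X : Finset α => ∑ u ∈ X, m u = p X ∧ s ∈ X
  obtain ⟨T, hT, hTmin⟩ := tight.exists_min_image card ⟨univ, by simp [tight, hm.2]⟩
  obtain ⟨hTtight, hsT⟩ := (mem_filter.1 hT).2
  refine ⟨T, hTtight, hsT, fun X hX hsX => ?_⟩
  have hTX : T ∩ X ∈ tight := by
    simp only [tight, mem_filter, mem_univ, true_and]
    exact ⟨tight_inter hp hm hTtight hX, mem_inter.2 ⟨hsT, hsX⟩⟩
  have hTX_eq : T ∩ X = T := eq_of_subset_of_card_le inter_subset_left (hTmin _ hTX)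
  exact hTX_eq ▸ inter_subset_right

theorem exists_transfer_mem (hp : Supermodular p) {a b : α → ℤ} (ha : a ∈ Bdot p)
    (hb : b ∈ Bdot p) {s : α} (hs : b s < a s) :
    ∃ t, a t < b t ∧ transfer a s t ∈ Bdot p := by
  obtain ⟨T, hT, hsT, hTmin⟩ := exists_minimal_tight hp ha s
  obtain ⟨t, htT, ht⟩ : ∃ t ∈ T, a t < b t := by
    by_contra! hle
    have := sum_lt_sum hle ⟨s, hsT, hs⟩
    have := hb.1 T
    omega
  refine ⟨t, ht, transfer_mem ha fun X hsX htX => (ha.1 X).lt_of_ne fun hX => ?_⟩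
  exact htX (hTmin X hX.symm hsX htT)

end Bdot

theorem decLE_of_forall_transfer_not_mem [Fintype α] [DecidableEq α] {p : Finset α → ℤ}
    (hp : Supermodular p) {m : α → ℤ} (hm : m ∈ Bdot p)
    (hloc : ∀ s t, m t + 2 ≤ m s → transfer m s t ∉ Bdot p) (y : α → ℤ) (hy : y ∈ Bdot p) :
    DecLE m y := by
  rw [decLE_iff_le, ← not_lt]
  intro hlt
  obtain ⟨z, ⟨hz, hzlt⟩, hmin⟩ :=
    (measure fun z : α → ℤ => ∑ u, (z u - m u).natAbs).wf.has_min
      {z | z ∈ Bdot p ∧ sortedDesc z < sortedDesc m} ⟨y, hy, hlt⟩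
  obtain ⟨s₀, hs₀⟩ := Bdot.exists_lt_of_ne hm hz (ne_of_apply_ne sortedDesc hzlt.ne)
  obtain ⟨s, hs, hsmax⟩ := (univ.filter fun u => m u < z u).exists_max_image z ⟨s₀, by simpa⟩
  replace hs : m s < z s := (mem_filter.1 hs).2
  obtain ⟨t, ht, hzt⟩ := Bdot.exists_transfer_mem hp hz hm hs
  have hst : s ≠ t := by rintro rfl; omega
  rcases lt_or_ge (z t) (z s) with hts | hst'
  · exact hmin _ ⟨hzt, (sortedDesc_transfer_le z hst hts).trans_lt hzlt⟩
      (sum_natAbs_transfer_lt hs ht)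
  · obtain ⟨u, hu, hmu⟩ := Bdot.exists_transfer_mem hp hm hz ht
    have := hsmax u (by simpa)
    exact hloc t u (by omega) hmu

section SymmetricStrictlyConvex

variable {Φ : (α → ℤ) → ℝ}

theorem lt_of_transfer [DecidableEq α]
    (hsym : ∀ (z : α → ℤ) (σ : Equiv.Perm α), Φ (z ∘ σ) = Φ z)
    (hconv : ∀ (x y : α → ℤ), x ≠ y → ∀ (lam : ℝ), 0 < lam → lam < 1 →
      ∀ w : α → ℤ, (∀ s : α, (w s : ℝ) = lam * (x s : ℝ) + (1 - lam) * (y s : ℝ)) →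
        Φ w < lam * Φ x + (1 - lam) * Φ y)
    {m : α → ℤ} {s t : α} (hgap : m t + 2 ≤ m s) : Φ (transfer m s t) < Φ m := by
  have hst : s ≠ t := by rintro rfl; omega
  have hd : (2 : ℝ) ≤ m s - m t := by exact_mod_cast (by omega : (2 : ℤ) ≤ m s - m t)
  set lam : ℝ := 1 / (m s - m t)
  have hlam : lam * (m s - m t) = 1 := one_div_mul_cancel (by linarith)
  have hlam0 : 0 < lam := one_div_pos.2 (by linarith)
  have hlam1 : lam < 1 := (div_lt_one (by linarith)).2 (by linarith)
  have hswap : m ∘ Equiv.swap s t ≠ m := fun h => by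
    have := congrFun h s
    simp only [Function.comp_apply, Equiv.swap_apply_left] at this
    omega
  have key := hconv _ _ hswap lam hlam0 hlam1 (transfer m s t) fun u => by
    rw [transfer_apply]
    by_cases hus : u = s
    · subst hus
      simp only [if_pos, if_neg hst, Function.comp_apply, Equiv.swap_apply_left]
      push_cast
      linear_combination hlam
    by_cases hut : u = t
    · subst hut
      simp only [if_pos, if_neg hus, Function.comp_apply, Equiv.swap_apply_right]
      push_cast
      linear_combination -hlam
    · simp only [if_neg hus, if_neg hut, Function.comp_apply,
        Equiv.swap_apply_of_ne_of_ne hus hut]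
      push_cast
      ring
  rw [hsym] at key
  linarith

theorem eq_of_sortedDesc_eq [Fintype α]
    (hsym : ∀ (z : α → ℤ) (σ : Equiv.Perm α), Φ (z ∘ σ) = Φ z)
    {x y : α → ℤ} (h : sortedDesc x = sortedDesc y) : Φ x = Φ y := by
  obtain ⟨σ, hσ⟩ := exists_perm_comp_eq_of_map_univ_eq (map_univ_eq_of_sortedDesc_eq h)
  rw [← hσ, hsym]

end SymmetricStrictlyConvex

theorem stmt12_general [Fintype α] [DecidableEq α]
    (p : Finset α → ℤ) (hp : Supermodular p)
    (Φ : (α → ℤ) → ℝ)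
    (hsym : ∀ (z : α → ℤ) (σ : Equiv.Perm α), Φ (z ∘ σ) = Φ z)
    (hconv : ∀ (x y : α → ℤ), x ≠ y → ∀ (lam : ℝ), 0 < lam → lam < 1 →
      ∀ w : α → ℤ, (∀ s : α, (w s : ℝ) = lam * (x s : ℝ) + (1 - lam) * (y s : ℝ)) →
        Φ w < lam * Φ x + (1 - lam) * Φ y)
    (m : α → ℤ) (hm : m ∈ Bdot p) :
    (∀ y ∈ Bdot p, Φ m ≤ Φ y) ↔ (∀ y ∈ Bdot p, DecLE m y) := by
  have decLE_of_min : ∀ m' ∈ Bdot p, (∀ y ∈ Bdot p, Φ m' ≤ Φ y) → ∀ y ∈ Bdot p, DecLE m' y :=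
    fun m' hm' hmin => decLE_of_forall_transfer_not_mem hp hm' fun s t hgap hmem =>
      (hmin _ hmem).not_gt (lt_of_transfer hsym hconv hgap)
  refine ⟨decLE_of_min m hm, fun hdec y hy => ?_⟩
  obtain ⟨m', hm', hmin⟩ := Set.exists_min_image _ Φ (Bdot.finite p) ⟨m, hm⟩
  have hsorted : sortedDesc m = sortedDesc m' :=
    (decLE_iff_le.1 (hdec m' hm')).antisymm (decLE_iff_le.1 (decLE_of_min m' hm' hmin m hm))
  rw [eq_of_sortedDesc_eq hsym hsorted]
  exact hmin y hy

/-- For a symmetric strictly convex function `Φ : ℤ^S → ℝ`, an element of `Ḃ(p)`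
minimizes `Φ` over `Ḃ(p)` iff it is a dec-min element of `Ḃ(p)`. -/
theorem stmt12 [Fintype α] [DecidableEq α] [Nonempty α]
    (p : Finset α → ℤ) (hp : Supermodular p) (h0 : p ∅ = 0)
    (hne : (Bdot p).Nonempty)
    (Φ : (α → ℤ) → ℝ)
    (hsym : ∀ (z : α → ℤ) (σ : Equiv.Perm α), Φ (z ∘ σ) = Φ z)
    (hconv : ∀ (x y : α → ℤ), x ≠ y → ∀ (lam : ℝ), 0 < lam → lam < 1 →
      ∀ w : α → ℤ, (∀ s : α, (w s : ℝ) = lam * (x s : ℝ) + (1 - lam) * (y s : ℝ)) →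
        Φ w < lam * Φ x + (1 - lam) * Φ y)
    (m : α → ℤ) (hm : m ∈ Bdot p) :
    (∀ y ∈ Bdot p, Φ m ≤ Φ y) ↔ (∀ y ∈ Bdot p, DecLE m y) :=
  stmt12_general p hp Φ hsym hconv m hm
end

section
/- Let p be an integer-valued supermodular set-function on the subsets of a nonempty finite set S with p(∅) = 0, and assume Ḃ(p) is nonempty. Then an element m of Ḃ(p) minimizes the square-sum W(z) = Σ_{s ∈ S} z(s)² over Ḃ(p) if and only if m is a decreasingly minimal element of Ḃ(p). -/
open Finset

variable {α : Type*}

/-!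
Both conditions are equivalent to local optimality: no step `m + χ_s - χ_t ∈ Ḃ(p)` has
`m t ≥ m s + 2`, since such a step lowers the square-sum by `2 (m t - m s - 1)` and makes
`m↓` lexicographically smaller. Conversely, let `m` be locally optimal and `y ≠ m` in `Ḃ(p)`.
The exchange property of `Ḃ(p)`, which comes from supermodularity through least tight sets,
gives a step `y + χ_s - χ_t ∈ Ḃ(p)` towards `m` with `y s < y t`. Such a step increases
neither the square-sum nor `y↓`, so induction on `‖m - y‖₁` gives `m ≤ y` in both senses.
-/

section DescSort

variable {β : Type*} [LinearOrder β]

def descSort (M : Multiset β) : List β := (M.sort (· ≤ ·)).reverse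

lemma pairwise_descSort (M : Multiset β) : (descSort M).Pairwise (· ≥ ·) :=
  List.pairwise_reverse.mpr (M.pairwise_sort _)

@[simp]
lemma coe_descSort (M : Multiset β) : (descSort M : Multiset β) = M := by
  rw [descSort, Multiset.coe_reverse, Multiset.sort_eq]

lemma mem_descSort {M : Multiset β} {b : β} : b ∈ descSort M ↔ b ∈ M := by
  rw [← Multiset.mem_coe, coe_descSort]

lemma descSort_coe {l : List β} (hl : l.Pairwise (· ≥ ·)) : descSort (l : Multiset β) = l :=
  List.Perm.eq_of_pairwise' (pairwise_descSort _) hl (Multiset.coe_eq_coe.mp (coe_descSort _))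

lemma descSort_cons_of_forall_le {M : Multiset β} {a : β} (h : ∀ b ∈ M, b ≤ a) :
    descSort (a ::ₘ M) = a :: descSort M := by
  conv_lhs => rw [← coe_descSort M, Multiset.cons_coe]
  exact descSort_coe (List.pairwise_cons.mpr
    ⟨fun b hb => h b (mem_descSort.mp hb), pairwise_descSort M⟩)

lemma lex_descSort_of_forall_lt {M M' : Multiset β} {a : β} (hM' : M' ≠ 0)
    (hlt : ∀ b ∈ M', b < a) (hM : ∀ b ∈ M, b ≤ a) :
    List.Lex (· < ·) (descSort M') (descSort (a ::ₘ M)) := by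
  rw [descSort_cons_of_forall_le hM]
  rcases hsort : descSort M' with _ | ⟨c, l⟩
  · exact absurd (by rw [← coe_descSort M', hsort]; rfl) hM'
  · exact List.Lex.rel (hlt c (mem_descSort.mp (hsort ▸ List.mem_cons_self)))

/-- The two arrangements agree on the entries of `N` that are at least `a`, and then
differ at `a`. -/
lemma lex_descSort_cons_cons {a b a' b' : β} (hba : b ≤ a) (ha' : a' < a) (hb' : b' < a)
    (N : Multiset β) :
    List.Lex (· < ·) (descSort (a' ::ₘ b' ::ₘ N)) (descSort (a ::ₘ b ::ₘ N)) := by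
  obtain ⟨l, hl, rfl⟩ : ∃ l : List β, l.Pairwise (· ≥ ·) ∧ (l : Multiset β) = N :=
    ⟨_, pairwise_descSort N, coe_descSort N⟩
  induction l with
  | nil =>
    refine lex_descSort_of_forall_lt Multiset.cons_ne_zero ?_ ?_ <;> simp [*]
  | cons c l ih =>
    obtain ⟨hcl, hl⟩ := List.pairwise_cons.mp hl
    rcases lt_or_ge c a with hca | hac
    · refine lex_descSort_of_forall_lt Multiset.cons_ne_zero ?_ ?_
      · simp only [Multiset.mem_cons, Multiset.mem_coe, List.mem_cons]
        rintro z (rfl | rfl | rfl | hz)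
        exacts [ha', hb', hca, (hcl z hz).trans_lt hca]
      · simp only [Multiset.mem_cons, Multiset.mem_coe, List.mem_cons]
        rintro z (rfl | rfl | hz)
        exacts [hba, hca.le, ((hcl z hz).trans_lt hca).le]
    · have hpeel : ∀ x y : β, x ≤ c → y ≤ c →
          descSort (x ::ₘ y ::ₘ ↑(c :: l)) = c :: descSort (x ::ₘ y ::ₘ ↑l) := by
        intro x y hx hy
        rw [← Multiset.cons_coe, Multiset.cons_swap y, Multiset.cons_swap x]
        refine descSort_cons_of_forall_le ?_
        simp only [Multiset.mem_cons, Multiset.mem_coe]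
        rintro z (rfl | rfl | hz)
        exacts [hx, hy, hcl z hz]
      rw [hpeel _ _ (ha'.le.trans hac) (hb'.le.trans hac), hpeel _ _ hac (hba.trans hac)]
      exact List.Lex.cons (ih hl)

end DescSort

section Move

variable [DecidableEq α] {m : α → ℤ} {s t : α}

def move (m : α → ℤ) (s t : α) : α → ℤ := m + Pi.single s 1 - Pi.single t 1

lemma move_apply (m : α → ℤ) (s t u : α) :
    move m s t u = m u + (if u = s then 1 else 0) - (if u = t then 1 else 0) := by
  simp [move, Pi.single_apply]

lemma sum_move (m : α → ℤ) (s t : α) (X : Finset α) :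
    ∑ u ∈ X, move m s t u = ∑ u ∈ X, m u + (if s ∈ X then 1 else 0) - (if t ∈ X then 1 else 0) := by
  simp only [move, Pi.add_apply, Pi.sub_apply, Finset.sum_add_distrib, Finset.sum_sub_distrib,
    Finset.sum_pi_single']

variable [Fintype α]

lemma exists_map_univ_move (hst : s ≠ t) :
    ∃ N : Multiset ℤ, univ.val.map m = m s ::ₘ m t ::ₘ N ∧
      univ.val.map (move m s t) = (m s + 1) ::ₘ (m t - 1) ::ₘ N := by
  have huniv : (univ : Finset α).val = s ::ₘ t ::ₘ ((univ.erase s).erase t).val := by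
    rw [Finset.erase_val, Finset.erase_val, Multiset.cons_erase, Multiset.cons_erase]
    · exact mem_univ s
    · exact (Multiset.mem_erase_of_ne hst.symm).mpr (mem_univ t)
  refine ⟨((univ.erase s).erase t).val.map m, by rw [huniv]; simp, ?_⟩
  rw [huniv]
  simp only [Multiset.map_cons]
  congr 2
  · simp [move_apply, hst]
  · simp [move_apply, hst.symm]
  refine Multiset.map_congr rfl fun u hu => ?_
  obtain ⟨hut, hus⟩ := Finset.mem_erase.mp hu
  simp [move_apply, hut, Finset.ne_of_mem_erase hus]

lemma sum_sq_move (hst : s ≠ t) :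
    ∑ u, move m s t u ^ 2 = ∑ u, m u ^ 2 + 2 * (m s - m t + 1) := by
  obtain ⟨N, hm, hmove⟩ := exists_map_univ_move (m := m) hst
  have hsq (x : α → ℤ) : ∑ u, x u ^ 2 = ((univ.val.map x).map (· ^ 2)).sum := by
    rw [Multiset.map_map]; rfl
  rw [hsq, hsq, hm, hmove]
  simp only [Multiset.map_cons, Multiset.sum_cons]
  ring

lemma sum_sq_move_le (h : m s + 1 ≤ m t) : ∑ u, move m s t u ^ 2 ≤ ∑ u, m u ^ 2 := by
  rw [sum_sq_move (show s ≠ t by rintro rfl; omega)]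
  omega

lemma lex_sortedDesc_move (h : m s + 2 ≤ m t) :
    List.Lex (· < ·) (sortedDesc (move m s t)) (sortedDesc m) := by
  obtain ⟨N, hm, hmove⟩ := exists_map_univ_move (m := m) (show s ≠ t by rintro rfl; omega)
  change List.Lex _ (descSort (univ.val.map _)) (descSort (univ.val.map m))
  rw [hm, hmove, Multiset.cons_swap (m s + 1), Multiset.cons_swap (m s)]
  exact lex_descSort_cons_cons (by omega) (by omega) (by omega) N

lemma decLE_move (h : m s + 1 ≤ m t) : DecLE (move m s t) m := by
  rcases h.eq_or_lt with h | h
  · obtain ⟨N, hm, hmove⟩ := exists_map_univ_move (m := m) (show s ≠ t by rintro rfl; omega)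
    left
    change descSort (univ.val.map _) = descSort (univ.val.map m)
    rw [hm, hmove, h, show m t - 1 = m s by omega, Multiset.cons_swap]
  · exact Or.inr (lex_sortedDesc_move (by omega))

end Move

lemma DecLE.trans [Fintype α] {x y z : α → ℤ} (hxy : DecLE x y) (hyz : DecLE y z) :
    DecLE x z := by
  rcases hxy with hxy | hxy <;> rcases hyz with hyz | hyz
  · exact Or.inl (hxy.trans hyz)
  · exact Or.inr (hxy ▸ hyz)
  · exact Or.inr (hyz ▸ hxy)
  · exact Or.inr (List.lex_trans lt_trans hxy hyz)

lemma not_decLE_of_lex [Fintype α] {x y : α → ℤ}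
    (h : List.Lex (· < ·) (sortedDesc y) (sortedDesc x)) : ¬ DecLE x y := by
  rintro (hxy | hxy)
  · exact irrefl_of (List.Lex (· < ·)) _ (hxy ▸ h)
  · exact irrefl_of (List.Lex (· < ·)) _ (List.lex_trans lt_trans hxy h)

section Exchange

variable [Fintype α] [DecidableEq α] {p : Finset α → ℤ} {m y : α → ℤ}

def IsTight (p : Finset α → ℤ) (m : α → ℤ) (X : Finset α) : Prop := ∑ u ∈ X, m u = p X

lemma IsTight.inter (hp : Supermodular p) (hm : m ∈ Bdot p) {X Y : Finset α}
    (hX : IsTight p m X) (hY : IsTight p m Y) : IsTight p m (X ∩ Y) := by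
  have hsum : ∑ u ∈ X ∪ Y, m u + ∑ u ∈ X ∩ Y, m u = ∑ u ∈ X, m u + ∑ u ∈ Y, m u :=
    Finset.sum_union_inter
  have := hp X Y
  have := hm.1 (X ∩ Y)
  have := hm.1 (X ∪ Y)
  unfold IsTight at *
  omega

lemma exists_least_tight (hp : Supermodular p) (hm : m ∈ Bdot p) (s : α) :
    ∃ F, s ∈ F ∧ IsTight p m F ∧ ∀ X, s ∈ X → IsTight p m X → F ⊆ X := by
  classical
  obtain ⟨F, hF, hFmin⟩ := Finset.exists_min_image
    (univ.filter fun X : Finset α => s ∈ X ∧ IsTight p m X) Finset.card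
    ⟨univ, Finset.mem_filter.mpr ⟨mem_univ _, mem_univ s, hm.2⟩⟩
  obtain ⟨hsF, hF⟩ := (Finset.mem_filter.mp hF).2
  refine ⟨F, hsF, hF, fun X hsX hX => ?_⟩
  have hcard := hFmin (F ∩ X) (by simp [hsF, hsX, hF.inter hp hm hX])
  rw [← Finset.eq_of_subset_of_card_le Finset.inter_subset_left hcard]
  exact Finset.inter_subset_right

lemma move_mem_Bdot (hm : m ∈ Bdot p) {s t : α}
    (h : ∀ X, t ∈ X → IsTight p m X → s ∈ X) : move m s t ∈ Bdot p := by
  refine ⟨fun X => ?_, by simpa [sum_move] using hm.2⟩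
  have hX := hm.1 X
  rw [sum_move]
  by_cases htX : t ∈ X
  · by_cases hsX : s ∈ X
    · simp [hsX, htX, hX]
    · have hstrict : p X ≠ ∑ u ∈ X, m u := fun heq => hsX (h X htX heq.symm)
      simp only [hsX, htX, if_true, if_false]
      omega
  · split_ifs <;> omega

/-- The exchange property of `Ḃ(p)`: the unit leaves `s` for an element `t` of the least
`m`-tight set containing `s` with `m t < y t`. -/
lemma exists_move_mem_Bdot (hp : Supermodular p) (hm : m ∈ Bdot p) (hy : y ∈ Bdot p) {s : α}
    (hs : y s < m s) : ∃ t, m t < y t ∧ move m t s ∈ Bdot p := by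
  obtain ⟨F, hsF, hF, hFleast⟩ := exists_least_tight hp hm s
  have hlt : ∑ u ∈ F.erase s, m u < ∑ u ∈ F.erase s, y u := by
    rw [Finset.sum_erase_eq_sub hsF, Finset.sum_erase_eq_sub hsF]
    have := hy.1 F
    unfold IsTight at hF
    omega
  obtain ⟨t, htF, ht⟩ := Finset.exists_lt_of_sum_lt hlt
  exact ⟨t, ht, move_mem_Bdot hm fun X hsX hX => hFleast X hsX hX (Finset.mem_of_mem_erase htF)⟩

end Exchange

section LocalOptimality

variable [Fintype α] [DecidableEq α] {p : Finset α → ℤ} {m : α → ℤ}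

/-- In the paper's terms: `m` admits no 1-tightening step. -/
def IsLocallyOptimal (p : Finset α → ℤ) (m : α → ℤ) : Prop :=
  ∀ s t, move m s t ∈ Bdot p → m t ≤ m s + 1

lemma exists_move_toward {y : α → ℤ} (hp : Supermodular p) (hm : m ∈ Bdot p)
    (hloc : IsLocallyOptimal p m) (hy : y ∈ Bdot p) (hne : y ≠ m) :
    ∃ s t, y s < m s ∧ m t < y t ∧ y s + 1 ≤ y t ∧ move y s t ∈ Bdot p := by
  have hexists : ∃ t, m t < y t := by
    by_contra! hle
    refine hne (funext fun u => ?_)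
    have hsum : ∑ u, y u = ∑ u, m u := by rw [hy.2, hm.2]
    exact (Finset.sum_eq_sum_iff_of_le fun u _ => hle u).mp hsum u (mem_univ u)
  obtain ⟨t₀, ht₀⟩ := hexists
  obtain ⟨t, htmem, htmax⟩ := Finset.exists_max_image
    (univ.filter fun t => m t < y t) y ⟨t₀, by simp [ht₀]⟩
  have ht : m t < y t := (Finset.mem_filter.mp htmem).2
  obtain ⟨s, hs, hys⟩ := exists_move_mem_Bdot hp hy hm ht
  obtain ⟨r, hr, hmr⟩ := exists_move_mem_Bdot hp hm hy hs
  have hyr : y r ≤ y t := htmax r (by simp [hr])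
  have := hloc r s hmr
  -- y s + 1 ≤ m s ≤ m r + 1 ≤ y r ≤ y t
  exact ⟨s, t, hs, ht, by omega, hys⟩

lemma sum_natAbs_sub_move_lt {y : α → ℤ} {s t : α} (hs : y s < m s) (ht : m t < y t) :
    ∑ u, (m u - move y s t u).natAbs < ∑ u, (m u - y u).natAbs := by
  refine Finset.sum_lt_sum (fun u _ => ?_) ⟨s, mem_univ s, ?_⟩
  · rw [move_apply]
    split_ifs <;> subst_vars <;> omega
  · have hst : s ≠ t := by rintro rfl; omega
    simp only [move_apply, if_neg hst, if_pos, sub_zero]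
    omega

theorem IsLocallyOptimal.rel_of_mem {r : (α → ℤ) → (α → ℤ) → Prop} (hrefl : ∀ x, r x x)
    (htrans : ∀ {x y z}, r x y → r y z → r x z)
    (hmove : ∀ y s t, y s + 1 ≤ y t → r (move y s t) y)
    (hp : Supermodular p) (hm : m ∈ Bdot p) (hloc : IsLocallyOptimal p m) {y : α → ℤ}
    (hy : y ∈ Bdot p) : r m y := by
  by_cases hne : y = m
  · exact hne ▸ hrefl m
  obtain ⟨s, t, hs, ht, hst, hmove_mem⟩ := exists_move_toward hp hm hloc hy hne
  exact htrans (hloc.rel_of_mem hrefl htrans hmove hp hm hmove_mem) (hmove y s t hst)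
termination_by ∑ u, (m u - y u).natAbs
decreasing_by exact sum_natAbs_sub_move_lt hs ht

lemma isLocallyOptimal_of_sum_sq_le (hW : ∀ y ∈ Bdot p, ∑ u, m u ^ 2 ≤ ∑ u, y u ^ 2) :
    IsLocallyOptimal p m := by
  intro s t hmove
  by_contra! h
  have := hW _ hmove
  rw [sum_sq_move (show s ≠ t by rintro rfl; omega)] at this
  omega

lemma isLocallyOptimal_of_decLE (hD : ∀ y ∈ Bdot p, DecLE m y) : IsLocallyOptimal p m := by
  intro s t hmove
  by_contra! h
  exact not_decLE_of_lex (lex_sortedDesc_move (by omega)) (hD _ hmove)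

end LocalOptimality

theorem stmt13_general [Fintype α] [DecidableEq α]
    (p : Finset α → ℤ) (hp : Supermodular p)
    (m : α → ℤ) (hm : m ∈ Bdot p) :
    (∀ y ∈ Bdot p, ∑ s : α, (m s) ^ 2 ≤ ∑ s : α, (y s) ^ 2) ↔
      (∀ y ∈ Bdot p, DecLE m y) := by
  constructor
  · intro hW y hy
    exact (isLocallyOptimal_of_sum_sq_le hW).rel_of_mem (r := DecLE) (fun _ => Or.inl rfl)
      DecLE.trans (fun _ _ _ => decLE_move) hp hm hy
  · intro hD y hy
    exact (isLocallyOptimal_of_decLE hD).rel_of_mem (r := fun x y => ∑ u, x u ^ 2 ≤ ∑ u, y u ^ 2)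
      (fun _ => le_rfl) le_trans (fun _ _ _ => sum_sq_move_le) hp hm hy

/-- An element of `Ḃ(p)` minimizes the square-sum of components over `Ḃ(p)` iff
it is a dec-min element of `Ḃ(p)`. -/
theorem stmt13 [Fintype α] [DecidableEq α] [Nonempty α]
    (p : Finset α → ℤ) (hp : Supermodular p) (h0 : p ∅ = 0)
    (hne : (Bdot p).Nonempty)
    (m : α → ℤ) (hm : m ∈ Bdot p) :
    (∀ y ∈ Bdot p, ∑ s : α, (m s) ^ 2 ≤ ∑ s : α, (y s) ^ 2) ↔
      (∀ y ∈ Bdot p, DecLE m y) :=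
  stmt13_general p hp m hm
end

section
/- Let p be an arbitrary integer-valued set-function on the subsets of a nonempty finite set S with p(∅) = 0 (no supermodularity assumed), and let m be an element of Ḃ(p). Then for every π : S → ℤ and every bijection σ : {1, …, n} → S with π(σ(1)) ≥ π(σ(2)) ≥ ⋯ ≥ π(σ(n)): Σ_{s ∈ S} m(s)² ≥ p̂_σ(π) − Σ_{s ∈ S} ⌊π(s)/2⌋·⌈π(s)/2⌉. Moreover, equality holds if and only if both of the following optimality criteria hold: (O1) m(s) ∈ {⌊π(s)/2⌋, ⌈π(s)/2⌉} for every s ∈ S, and (O2) every strict π-top set is m-tight with respect to p. -/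
open Finset

variable {α : Type*}

/-- The linear-extension value `p̂_σ(π)` for a nonincreasing arrangement `σ` of `π`:
`p̂_σ(π) = p(S)·π(σ(n)) + Σ_{j=1}^{n−1} p(I_j)·(π(σ(j)) − π(σ(j+1)))`,
where `I_j = {σ(1), …, σ(j)}`. -/
def phat [Fintype α] [DecidableEq α] (p : Finset α → ℤ) (π : α → ℤ)
    (σ : Fin (Fintype.card α) ≃ α) : ℤ :=
  ∑ j : Fin (Fintype.card α),
    p ((Finset.univ.filter (fun i => i ≤ j)).image σ) *
      (π (σ j) -
        if h : (j : ℕ) + 1 < Fintype.card α then π (σ ⟨(j : ℕ) + 1, h⟩) else 0)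

/-!
`phat` is linear in the set-function, and Abel summation turns `phat` of the modular function
`m̃` into `Σ m(s) π(s)`. Hence `Σ m² - p̂_σ(π) + Σ ⌊π/2⌋⌈π/2⌉` is the sum of
`Σ_s (m(s) - ⌊π(s)/2⌋)(m(s) - ⌈π(s)/2⌉)`, whose terms are `≥ 0` because no integer lies strictly
between `⌊a/2⌋` and `⌈a/2⌉`, and of `phat (m̃ - p)`, whose terms
`(m̃ - p)(I_j) · (π(σ j) - π(σ (j+1)))` are `≥ 0` (the last one vanishes since `m̃(S) = p(S)`).
Equality thus means (O1) together with `m̃(I_j) = p(I_j)` wherever `π` drops after `j`; those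
`I_j`, together with `S`, are exactly the strict `π`-top sets.
-/

theorem Int.floor_half_add_ceil_half (a : ℤ) : ⌊(a : ℚ) / 2⌋ + ⌈(a : ℚ) / 2⌉ = a := by
  have h := Rat.floor_intCast_div_natCast a 2
  have h' := Rat.ceil_intCast_div_natCast a 2
  push_cast at h h'
  omega

theorem Int.mul_sub_sub_nonneg {a b : ℤ} (x : ℤ) (hab : a ≤ b) (hba : b ≤ a + 1) :
    0 ≤ (x - a) * (x - b) := by
  rcases le_or_gt x a with h | h
  · exact mul_nonneg_of_nonpos_of_nonpos (by omega) (by omega)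
  · exact mul_nonneg (by omega) (by omega)

def Fin.nextOrZero {n : ℕ} (f : Fin n → ℤ) (j : Fin n) : ℤ :=
  if h : (j : ℕ) + 1 < n then f ⟨j + 1, h⟩ else 0

theorem Fin.nextOrZero_of_lt {n : ℕ} (f : Fin n → ℤ) {j : Fin n} (h : (j : ℕ) + 1 < n) :
    Fin.nextOrZero f j = f ⟨j + 1, h⟩ :=
  dif_pos h

theorem Fin.sum_Ici_sub_nextOrZero {n : ℕ} (f : Fin n → ℤ) (i : Fin n) :
    ∑ j ∈ Finset.Ici i, (f j - Fin.nextOrZero f j) = f i := by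
  set F : ℕ → ℤ := fun k => if h : k < n then f ⟨k, h⟩ else 0
  have hF : ∀ j : Fin n, f j - Fin.nextOrZero f j = -(F (j + 1) - F j) := fun j => by
    simp [F, Fin.nextOrZero, j.isLt]
  have hFn : F n = 0 := by simp [F]
  have hmap := Finset.sum_map (Finset.Ici i) Fin.valEmbedding (fun k => F (k + 1) - F k)
  rw [Fin.map_valEmbedding_Ici, Finset.sum_Ico_sub _ i.isLt.le, hFn] at hmap
  rw [Finset.sum_congr rfl fun j _ => hF j, Finset.sum_neg_distrib]
  simp only [Fin.valEmbedding_apply] at hmap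
  rw [← hmap]
  simp [F]

theorem Fin.sum_partialSum_mul_sub_nextOrZero {n : ℕ} (f g : Fin n → ℤ) :
    ∑ j, (∑ i ∈ Finset.Iic j, g i) * (f j - Fin.nextOrZero f j) = ∑ i, g i * f i := by
  simp_rw [Finset.sum_mul]
  rw [Finset.sum_comm' (t' := Finset.univ) (s' := fun i => Finset.Ici i) (by simp)]
  simp_rw [← Finset.mul_sum, Fin.sum_Ici_sub_nextOrZero]

section LinearExtension

variable [Fintype α] [DecidableEq α]

def initSeg (σ : Fin (Fintype.card α) ≃ α) (j : Fin (Fintype.card α)) : Finset α :=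
  (Finset.univ.filter (fun i => i ≤ j)).image σ

def IsStrictTopSet (π : α → ℤ) (X : Finset α) : Prop :=
  X.Nonempty ∧ ∀ u ∈ X, ∀ v, v ∉ X → π v < π u

variable {σ : Fin (Fintype.card α) ≃ α} {π : α → ℤ}

theorem mem_initSeg {j : Fin (Fintype.card α)} {s : α} : s ∈ initSeg σ j ↔ σ.symm s ≤ j := by
  simp [initSeg, ← Equiv.eq_symm_apply]

theorem initSeg_eq_univ {j : Fin (Fintype.card α)} (hj : ¬ (j : ℕ) + 1 < Fintype.card α) :
    initSeg σ j = Finset.univ :=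
  Finset.eq_univ_of_forall fun s => mem_initSeg.2 (Fin.le_def.2 (by have := (σ.symm s).isLt; omega))

theorem phat_eq_sum (p : Finset α → ℤ) (π : α → ℤ) (σ : Fin (Fintype.card α) ≃ α) :
    phat p π σ = ∑ j, p (initSeg σ j) * (π (σ j) - Fin.nextOrZero (π ∘ σ) j) :=
  rfl

theorem phat_sub (p q : Finset α → ℤ) (π : α → ℤ) (σ : Fin (Fintype.card α) ≃ α) :
    phat p π σ - phat q π σ = phat (fun X => p X - q X) π σ := by
  simp only [phat_eq_sum, ← Finset.sum_sub_distrib, sub_mul]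

theorem phat_sum (m π : α → ℤ) (σ : Fin (Fintype.card α) ≃ α) :
    phat (fun X => ∑ s ∈ X, m s) π σ = ∑ s, m s * π s := by
  have hseg : ∀ j, ∑ s ∈ initSeg σ j, m s = ∑ i ∈ Finset.Iic j, m (σ i) := fun j => by
    rw [initSeg, Finset.sum_image fun _ _ _ _ h => σ.injective h, Finset.filter_ge_eq_Iic]
  rw [phat_eq_sum]
  simp only [hseg]
  exact (Fin.sum_partialSum_mul_sub_nextOrZero (π ∘ σ) (m ∘ σ)).trans
    (Equiv.sum_comp σ fun s => m s * π s)

theorem IsStrictTopSet.exists_eq_initSeg (hσ : Antitone (π ∘ σ)) {X : Finset α}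
    (hX : IsStrictTopSet π X) : ∃ j, X = initSeg σ j := by
  obtain ⟨s₀, hs₀, hmax⟩ := Finset.exists_max_image X σ.symm hX.1
  refine ⟨σ.symm s₀, Finset.ext fun s => ⟨fun hs => mem_initSeg.2 (hmax s hs), fun hs => ?_⟩⟩
  by_contra hsX
  have hle : π s₀ ≤ π s := by simpa using hσ (mem_initSeg.1 hs)
  exact (hX.2 s₀ hs₀ s hsX).not_ge hle

theorem isStrictTopSet_initSeg (hσ : Antitone (π ∘ σ)) {j : Fin (Fintype.card α)}
    (hj : (j : ℕ) + 1 < Fintype.card α) (hlt : π (σ ⟨j + 1, hj⟩) < π (σ j)) :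
    IsStrictTopSet π (initSeg σ j) := by
  refine ⟨⟨σ j, mem_initSeg.2 (by simp)⟩, fun u hu v hv => ?_⟩
  have hu' : π (σ j) ≤ π u := by simpa using hσ (mem_initSeg.1 hu)
  have hv' : π v ≤ π (σ ⟨j + 1, hj⟩) := by
    rw [mem_initSeg, not_le] at hv
    simpa using hσ (show (⟨j + 1, hj⟩ : Fin _) ≤ σ.symm v from Fin.lt_def.1 hv)
  omega

variable {d : Finset α → ℤ}

theorem phat_term_nonneg (hσ : Antitone (π ∘ σ)) (hd : ∀ X, 0 ≤ d X) (hdS : d Finset.univ = 0)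
    (j : Fin (Fintype.card α)) :
    0 ≤ d (initSeg σ j) * (π (σ j) - Fin.nextOrZero (π ∘ σ) j) := by
  by_cases hj : (j : ℕ) + 1 < Fintype.card α
  · refine mul_nonneg (hd _) (sub_nonneg.2 ?_)
    rw [Fin.nextOrZero_of_lt _ hj]
    exact hσ (Fin.le_def.2 (Nat.le_succ _))
  · rw [initSeg_eq_univ hj, hdS, zero_mul]

theorem phat_nonneg (hσ : Antitone (π ∘ σ)) (hd : ∀ X, 0 ≤ d X) (hdS : d Finset.univ = 0) :
    0 ≤ phat d π σ :=
  Finset.sum_nonneg fun j _ => phat_term_nonneg hσ hd hdS j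

theorem phat_eq_zero_iff (hσ : Antitone (π ∘ σ)) (hd : ∀ X, 0 ≤ d X) (hdS : d Finset.univ = 0) :
    phat d π σ = 0 ↔ ∀ X, IsStrictTopSet π X → d X = 0 := by
  rw [phat_eq_sum, Finset.sum_eq_zero_iff_of_nonneg fun j _ => phat_term_nonneg hσ hd hdS j]
  constructor
  · intro h X hX
    obtain ⟨j, rfl⟩ := hX.exists_eq_initSeg hσ
    by_cases hj : (j : ℕ) + 1 < Fintype.card α
    · have hgap : 0 < π (σ j) - Fin.nextOrZero (π ∘ σ) j := by
        rw [Fin.nextOrZero_of_lt _ hj, sub_pos]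
        refine hX.2 _ (mem_initSeg.2 (by simp)) _ fun hmem => ?_
        have := Fin.le_def.1 (mem_initSeg.1 hmem)
        simp at this
      exact (mul_eq_zero.1 (h j (Finset.mem_univ _))).resolve_right hgap.ne'
    · rwa [initSeg_eq_univ hj]
  · intro h j _
    by_cases hj : (j : ℕ) + 1 < Fintype.card α
    · rw [Fin.nextOrZero_of_lt _ hj, Function.comp_apply]
      have hle : π (σ ⟨j + 1, hj⟩) ≤ π (σ j) := hσ (Fin.le_def.2 (Nat.le_succ j))
      rcases hle.eq_or_lt with heq | hlt
      · rw [heq, sub_self, mul_zero]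
      · rw [h _ (isStrictTopSet_initSeg hσ hj hlt), zero_mul]
    · rw [initSeg_eq_univ hj, hdS, zero_mul]

end LinearExtension

theorem sum_sq_sub_phat_eq [Fintype α] [DecidableEq α] (p : Finset α → ℤ) (m π : α → ℤ)
    (σ : Fin (Fintype.card α) ≃ α) :
    ∑ s, m s ^ 2 - (phat p π σ - ∑ s, ⌊(π s : ℚ) / 2⌋ * ⌈(π s : ℚ) / 2⌉) =
      ∑ s, (m s - ⌊(π s : ℚ) / 2⌋) * (m s - ⌈(π s : ℚ) / 2⌉) +
        phat (fun X => ∑ s ∈ X, m s - p X) π σ := by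
  have hsplit : ∀ s, (m s - ⌊(π s : ℚ) / 2⌋) * (m s - ⌈(π s : ℚ) / 2⌉) =
      m s ^ 2 - m s * π s + ⌊(π s : ℚ) / 2⌋ * ⌈(π s : ℚ) / 2⌉ := fun s => by
    linear_combination (-m s) * Int.floor_half_add_ceil_half (π s)
  rw [← phat_sub, phat_sum, Finset.sum_congr rfl fun s _ => hsplit s, Finset.sum_add_distrib,
    Finset.sum_sub_distrib]
  ring

theorem stmt15_general [Fintype α] [DecidableEq α]
    (p : Finset α → ℤ)
    (m : α → ℤ) (hm : m ∈ Bdot p)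
    (π : α → ℤ) (σ : Fin (Fintype.card α) ≃ α)
    (hσ : ∀ i j : Fin (Fintype.card α), i ≤ j → π (σ j) ≤ π (σ i)) :
    (phat p π σ - ∑ s : α, ⌊(π s : ℚ) / 2⌋ * ⌈(π s : ℚ) / 2⌉ ≤ ∑ s : α, (m s) ^ 2) ∧
    (∑ s : α, (m s) ^ 2 =
        phat p π σ - ∑ s : α, ⌊(π s : ℚ) / 2⌋ * ⌈(π s : ℚ) / 2⌉ ↔
      ((∀ s : α, m s = ⌊(π s : ℚ) / 2⌋ ∨ m s = ⌈(π s : ℚ) / 2⌉) ∧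
       (∀ X : Finset α, X.Nonempty →
          (∀ u ∈ X, ∀ v : α, v ∉ X → π v < π u) → ∑ s ∈ X, m s = p X))) := by
  obtain ⟨hlow, hS⟩ := hm
  have hanti : Antitone (π ∘ σ) := fun i j hij => hσ i j hij
  have hd : ∀ X, 0 ≤ ∑ s ∈ X, m s - p X := fun X => sub_nonneg.2 (hlow X)
  have hdS : ∑ s, m s - p Finset.univ = 0 := sub_eq_zero.2 hS
  have hterm : ∀ s ∈ Finset.univ, 0 ≤ (m s - ⌊(π s : ℚ) / 2⌋) * (m s - ⌈(π s : ℚ) / 2⌉) :=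
    fun s _ => Int.mul_sub_sub_nonneg _ (Int.floor_le_ceil _) (Int.ceil_le_floor_add_one _)
  have hA := Finset.sum_nonneg hterm
  have hB := phat_nonneg hanti hd hdS
  have key := sum_sq_sub_phat_eq p m π σ
  refine ⟨by linarith, ?_⟩
  rw [← sub_eq_zero, key, add_eq_zero_iff_of_nonneg hA hB, Finset.sum_eq_zero_iff_of_nonneg hterm,
    phat_eq_zero_iff hanti hd hdS]
  simp only [Finset.mem_univ, true_implies, mul_eq_zero, sub_eq_zero, IsStrictTopSet, and_imp]

/-- Lower bound for the integral square-sum over `Ḃ(p)` (for an arbitrary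
set-function `p`), with the optimality criteria (O1) and (O2) characterizing
equality. -/
theorem stmt15 [Fintype α] [DecidableEq α] [Nonempty α]
    (p : Finset α → ℤ) (h0 : p ∅ = 0)
    (m : α → ℤ) (hm : m ∈ Bdot p)
    (π : α → ℤ) (σ : Fin (Fintype.card α) ≃ α)
    (hσ : ∀ i j : Fin (Fintype.card α), i ≤ j → π (σ j) ≤ π (σ i)) :
    (phat p π σ - ∑ s : α, ⌊(π s : ℚ) / 2⌋ * ⌈(π s : ℚ) / 2⌉ ≤ ∑ s : α, (m s) ^ 2) ∧
    (∑ s : α, (m s) ^ 2 =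
        phat p π σ - ∑ s : α, ⌊(π s : ℚ) / 2⌋ * ⌈(π s : ℚ) / 2⌉ ↔
      ((∀ s : α, m s = ⌊(π s : ℚ) / 2⌋ ∨ m s = ⌈(π s : ℚ) / 2⌉) ∧
       (∀ X : Finset α, X.Nonempty →
          (∀ u ∈ X, ∀ v : α, v ∉ X → π v < π u) → ∑ s ∈ X, m s = p X))) :=
  stmt15_general p m hm π σ hσ
end

section
/- Let p be an integer-valued supermodular set-function on the subsets of a nonempty finite set S with p(∅) = 0, and assume Ḃ(p) is nonempty. Then min{ Σ_{s ∈ S} m(s)² : m ∈ Ḃ(p) } = max{ p̂_σ(π) − Σ_{s ∈ S} ⌊π(s)/2⌋·⌈π(s)/2⌉ }, where the maximum is taken over all π : S → ℤ and all bijections σ : {1, …, n} → S with π(σ(1)) ≥ ⋯ ≥ π(σ(n)); moreover, the maximum is attained by some π every component of which is an odd integer (together with any nonincreasing arrangement σ of that π). -/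
open Finset

variable {α : Type*}

/-!
Weak duality is summation by parts: for a nonincreasing arrangement `σ` of `π`,
`p̂_σ(π) ≤ ⟨π, m⟩` for every `m ∈ Ḃ(p)`, with equality when every prefix `I_j` at which `π`
strictly drops is `m`-tight; and `π m - ⌊π/2⌋⌈π/2⌉ ≤ m²` for all integers, with equality when
`π ∈ {2m - 1, 2m + 1}`.

For strong duality take `m ∈ Ḃ(p)` of least square-sum. Moving one unit from `s` to an element `t`
of the smallest `m`-tight set containing `s` stays in `Ḃ(p)`, so optimality forces
`m t ≥ m s - 1`. Hence the union `L_θ` of the smallest tight sets around the elements with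
`m > θ` is tight and contains only elements with `m ≥ θ`. Setting `π s = 2 m s + 1` if
`s ∈ L_{m s}` and `π s = 2 m s - 1` otherwise, the level set `{π ≥ 2θ + 1}` is exactly `L_θ`,
so all the inequalities above are equalities.
-/

section Tightness

def Tight (p : Finset α → ℤ) (m : α → ℤ) (X : Finset α) : Prop :=
  ∑ s ∈ X, m s = p X

instance (p : Finset α → ℤ) (m : α → ℤ) (X : Finset α) : Decidable (Tight p m X) :=
  inferInstanceAs (Decidable (_ = _))

variable [Fintype α] {p : Finset α → ℤ} {m : α → ℤ} {X Y : Finset α}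

lemma tight_univ (hm : m ∈ Bdot p) : Tight p m univ := hm.2

variable [DecidableEq α]

lemma Tight.union_and_inter (hp : Supermodular p) (hm : m ∈ Bdot p) (hX : Tight p m X)
    (hY : Tight p m Y) : Tight p m (X ∪ Y) ∧ Tight p m (X ∩ Y) := by
  have := hm.1 (X ∪ Y)
  have := hm.1 (X ∩ Y)
  have := hp X Y
  have := sum_union_inter (s₁ := X) (s₂ := Y) (f := m)
  unfold Tight at *
  constructor <;> linarith

variable (p m) in
def minTight (s : α) : Finset α :=
  (univ.filter (fun X => Tight p m X ∧ s ∈ X)).inf id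

lemma mem_minTight {s t : α} :
    t ∈ minTight p m s ↔ ∀ X, Tight p m X → s ∈ X → t ∈ X := by
  simp [minTight, mem_inf]

lemma tight_minTight (hp : Supermodular p) (hm : m ∈ Bdot p) (s : α) :
    Tight p m (minTight p m s) :=
  inf_induction (tight_univ hm) (fun _ hX _ hY => (hX.union_and_inter hp hm hY).2)
    (fun _ hX => (mem_filter.1 hX).2.1)

lemma add_single_sub_single_mem_Bdot (hm : m ∈ Bdot p) {s t : α}
    (hst : ∀ X, Tight p m X → s ∈ X → t ∈ X) :
    m + Pi.single t 1 - Pi.single s 1 ∈ Bdot p := by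
  have hsum : ∀ X : Finset α, ∑ x ∈ X, (m + Pi.single t 1 - Pi.single s 1 : α → ℤ) x =
      ∑ x ∈ X, m x + (if t ∈ X then 1 else 0) - (if s ∈ X then 1 else 0) := by
    intro X
    simp only [Pi.sub_apply, Pi.add_apply, sum_sub_distrib, sum_add_distrib, sum_pi_single']
  refine ⟨fun X => ?_, ?_⟩
  · have hle := hm.1 X
    have hslack : s ∈ X → t ∉ X → p X ≠ ∑ x ∈ X, m x :=
      fun hs ht hX => ht (hst X hX.symm hs)
    rw [hsum]
    split_ifs with ht hs hs
    · omega
    · omega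
    · have := lt_of_le_of_ne hle (hslack hs ht)
      omega
    · omega
  · rw [hsum]
    simp [hm.2]

lemma sum_sq_add_single_sub_single {s t : α} (hts : t ≠ s) :
    ∑ x, (m + Pi.single t 1 - Pi.single s 1 : α → ℤ) x ^ 2 =
      ∑ x, m x ^ 2 + 2 * (m t - m s + 1) := by
  rw [← sub_eq_iff_eq_add', ← sum_sub_distrib,
    ← sum_subset (subset_univ {t, s}) fun x _ hx => ?_, sum_pair hts]
  · simp [hts, hts.symm]
    ring
  · simp only [mem_insert, mem_singleton, not_or] at hx
    simp [hx.1, hx.2]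

lemma sub_one_le_of_mem_minTight (hm : m ∈ Bdot p)
    (hmin : ∀ m' ∈ Bdot p, ∑ x, m x ^ 2 ≤ ∑ x, m' x ^ 2) {s t : α} (ht : t ∈ minTight p m s) :
    m s - 1 ≤ m t := by
  rcases eq_or_ne t s with rfl | hts
  · omega
  have := hmin _ (add_single_sub_single_mem_Bdot hm (mem_minTight.1 ht))
  rw [sum_sq_add_single_sub_single hts] at this
  omega

variable (p m) in
def upperTight (θ : ℤ) : Finset α :=
  (univ.filter (fun u => θ < m u)).biUnion (minTight p m)

variable (p m) in
def oddDual (s : α) : ℤ :=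
  if s ∈ upperTight p m (m s) then 2 * m s + 1 else 2 * m s - 1

lemma mem_upperTight {θ : ℤ} {s : α} :
    s ∈ upperTight p m θ ↔ ∃ u, θ < m u ∧ s ∈ minTight p m u := by
  simp [upperTight]

lemma tight_upperTight (hp : Supermodular p) (h0 : p ∅ = 0) (hm : m ∈ Bdot p) (θ : ℤ) :
    Tight p m (upperTight p m θ) := by
  rw [upperTight, ← sup_eq_biUnion]
  exact sup_induction (by simpa [Tight] using h0.symm)
    (fun _ hX _ hY => (hX.union_and_inter hp hm hY).1) (fun u _ => tight_minTight hp hm u)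

lemma oddDual_eq_or (s : α) : oddDual p m s = 2 * m s + 1 ∨ oddDual p m s = 2 * m s - 1 := by
  unfold oddDual
  split_ifs <;> simp

lemma odd_oddDual (s : α) : Odd (oddDual p m s) := by
  rcases oddDual_eq_or (p := p) (m := m) s with h | h
  · exact ⟨m s, h⟩
  · exact ⟨m s - 1, by omega⟩

lemma filter_le_oddDual (hm : m ∈ Bdot p)
    (hmin : ∀ m' ∈ Bdot p, ∑ x, m x ^ 2 ≤ ∑ x, m' x ^ 2) (θ : ℤ) :
    univ.filter (fun s => 2 * θ + 1 ≤ oddDual p m s) = upperTight p m θ := by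
  ext s
  have hlow : s ∈ upperTight p m θ → θ ≤ m s := fun hs => by
    obtain ⟨u, hu, hsu⟩ := mem_upperTight.1 hs
    have := sub_one_le_of_mem_minTight hm hmin hsu
    omega
  have hhigh : θ < m s → s ∈ upperTight p m θ :=
    fun h => mem_upperTight.2 ⟨s, h, mem_minTight.2 fun _ _ hs => hs⟩
  rw [mem_filter, oddDual]
  simp only [mem_univ, true_and]
  rcases lt_trichotomy θ (m s) with h | rfl | h
  · simp only [hhigh h, iff_true]
    split_ifs <;> omega
  · split_ifs with hs <;> simp [hs]
  · have : s ∉ upperTight p m θ := fun hs => absurd (hlow hs) (by omega)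
    simp only [this, iff_false, not_le]
    split_ifs <;> omega

end Tightness

section Arrangement

variable {n : ℕ}

def gap (f : Fin n → ℤ) (j : Fin n) : ℤ :=
  f j - if h : (j : ℕ) + 1 < n then f ⟨j + 1, h⟩ else 0

lemma sum_Ici_gap (f : Fin n → ℤ) (i : Fin n) : ∑ j ∈ Ici i, gap f j = f i := by
  set F : ℕ → ℤ := fun k => if h : k < n then f ⟨k, h⟩ else 0
  have hgap : ∀ j : Fin n, gap f j = F j - F (j + 1) := fun j => by simp [gap, F]
  have htel := sum_Ico_sub F i.isLt.le
  rw [← Fin.map_valEmbedding_Ici, sum_map] at htel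
  simp only [Fin.valEmbedding_apply, sum_sub_distrib] at htel
  have hFn : F n = 0 := by simp [F]
  have hFi : F i = f i := by simp [F]
  simp only [hgap, sum_sub_distrib]
  linarith

lemma gap_nonneg {f : Fin n → ℤ} (hf : Antitone f) {j : Fin n} (hj : (j : ℕ) + 1 < n) :
    0 ≤ gap f j := by
  rw [gap, dif_pos hj, sub_nonneg]
  exact hf (Fin.le_def.2 (Nat.le_succ _))

variable [DecidableEq α]

def prefixSet (σ : Fin n ≃ α) (j : Fin n) : Finset α :=
  (univ.filter fun i => i ≤ j).image σ

variable [Fintype α]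

lemma prefixSet_eq_univ (σ : Fin n ≃ α) {j : Fin n} (hj : ¬ (j : ℕ) + 1 < n) :
    prefixSet σ j = univ := by
  refine eq_univ_of_forall fun s => mem_image.2 ⟨σ.symm s, ?_, σ.apply_symm_apply s⟩
  simp only [mem_filter, mem_univ, true_and, Fin.le_def]
  omega

lemma prefixSet_eq_filter_of_gap_ne_zero {π : α → ℤ} {σ : Fin n ≃ α} (hσ : Antitone (π ∘ σ))
    {j : Fin n} (hj : gap (π ∘ σ) j ≠ 0) :
    prefixSet σ j = univ.filter fun s => π (σ j) ≤ π s := by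
  ext s
  obtain ⟨k, rfl⟩ := σ.surjective s
  simp only [prefixSet, mem_image, mem_filter, mem_univ, true_and, σ.injective.eq_iff,
    exists_eq_right]
  refine ⟨fun hkj => hσ hkj, fun hjk => not_lt.1 fun hkj => hj ?_⟩
  have hj1 : (j : ℕ) + 1 < n := lt_of_le_of_lt hkj k.isLt
  have h₁ : π (σ k) ≤ π (σ ⟨j + 1, hj1⟩) := hσ (show (⟨j + 1, hj1⟩ : Fin n) ≤ k from hkj)
  have h₂ : π (σ ⟨j + 1, hj1⟩) ≤ π (σ j) := hσ (Fin.le_def.2 (Nat.le_succ _))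
  rw [gap, dif_pos hj1]
  exact sub_eq_zero.2 (le_antisymm h₂ (hjk.trans h₁)).symm

lemma sum_mul_eq_sum_prefixSet_mul_gap (π m : α → ℤ) (σ : Fin n ≃ α) :
    ∑ s, π s * m s = ∑ j, (∑ s ∈ prefixSet σ j, m s) * gap (π ∘ σ) j := by
  calc ∑ s, π s * m s = ∑ i, ∑ j ∈ Ici i, m (σ i) * gap (π ∘ σ) j := by
        rw [← σ.sum_comp]
        simp [← mul_sum, sum_Ici_gap, mul_comm]
    _ = ∑ j, ∑ i ∈ Iic j, m (σ i) * gap (π ∘ σ) j := sum_comm' (by simp)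
    _ = _ := by simp [prefixSet, sum_image σ.injective.injOn, sum_mul, filter_ge_eq_Iic]

end Arrangement

section LinearExtension

variable [Fintype α] [DecidableEq α] {p : Finset α → ℤ} {π m : α → ℤ}
  {σ : Fin (Fintype.card α) ≃ α}

lemma phat_eq_sum_prefixSet : phat p π σ = ∑ j, p (prefixSet σ j) * gap (π ∘ σ) j := rfl

lemma phat_le_sum_mul (hm : m ∈ Bdot p) (hσ : Antitone (π ∘ σ)) :
    phat p π σ ≤ ∑ s, π s * m s := by
  rw [phat_eq_sum_prefixSet, sum_mul_eq_sum_prefixSet_mul_gap π m σ]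
  refine sum_le_sum fun j _ => ?_
  by_cases hj : (j : ℕ) + 1 < Fintype.card α
  · exact mul_le_mul_of_nonneg_right (hm.1 _) (gap_nonneg hσ hj)
  · rw [prefixSet_eq_univ σ hj, hm.2]

lemma phat_eq_sum_mul (htight : ∀ j, gap (π ∘ σ) j ≠ 0 → Tight p m (prefixSet σ j)) :
    phat p π σ = ∑ s, π s * m s := by
  rw [phat_eq_sum_prefixSet, sum_mul_eq_sum_prefixSet_mul_gap π m σ]
  refine sum_congr rfl fun j _ => ?_
  by_cases hj : gap (π ∘ σ) j = 0
  · simp [hj]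
  · rw [htight j hj]

end LinearExtension

lemma floor_half (a : ℤ) : ⌊(a : ℚ) / 2⌋ = a / 2 := by
  exact_mod_cast Rat.floor_intCast_div_natCast a 2

lemma ceil_half (a : ℤ) : ⌈(a : ℚ) / 2⌉ = -(-a / 2) := by
  exact_mod_cast Rat.ceil_intCast_div_natCast a 2

lemma mul_sub_floor_mul_ceil_le (a b : ℤ) : a * b - ⌊(a : ℚ) / 2⌋ * ⌈(a : ℚ) / 2⌉ ≤ b ^ 2 := by
  rw [floor_half, ceil_half]
  set q := a / 2
  set r := -(-a / 2)
  have hqr : a * b - q * r = b ^ 2 - (b - q) * (b - r) := by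
    rw [show a = q + r by omega]
    ring
  -- no integer lies strictly between `⌊a/2⌋` and `⌈a/2⌉`
  have : 0 ≤ (b - q) * (b - r) := by
    rcases le_or_gt b q with h | h
    · exact mul_nonneg_of_nonpos_of_nonpos (by omega) (by omega)
    · exact mul_nonneg (by omega) (by omega)
  linarith

lemma mul_sub_floor_mul_ceil_eq {a b : ℤ} (h : a = 2 * b + 1 ∨ a = 2 * b - 1) :
    a * b - ⌊(a : ℚ) / 2⌋ * ⌈(a : ℚ) / 2⌉ = b ^ 2 := by
  rw [floor_half, ceil_half]
  rcases h with rfl | rfl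
  · rw [show (2 * b + 1) / 2 = b by omega, show -(-(2 * b + 1) / 2) = b + 1 by omega]
    ring
  · rw [show (2 * b - 1) / 2 = b - 1 by omega, show -(-(2 * b - 1) / 2) = b by omega]
    ring

section Duality

variable [Fintype α] [DecidableEq α] {p : Finset α → ℤ} {m : α → ℤ}

lemma phat_sub_le_sum_sq (hm : m ∈ Bdot p) {π : α → ℤ} {σ : Fin (Fintype.card α) ≃ α}
    (hσ : Antitone (π ∘ σ)) :
    phat p π σ - ∑ s, ⌊(π s : ℚ) / 2⌋ * ⌈(π s : ℚ) / 2⌉ ≤ ∑ s, m s ^ 2 :=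
  calc phat p π σ - ∑ s, ⌊(π s : ℚ) / 2⌋ * ⌈(π s : ℚ) / 2⌉
      ≤ ∑ s, π s * m s - ∑ s, ⌊(π s : ℚ) / 2⌋ * ⌈(π s : ℚ) / 2⌉ :=
        sub_le_sub_right (phat_le_sum_mul hm hσ) _
    _ = ∑ s, (π s * m s - ⌊(π s : ℚ) / 2⌋ * ⌈(π s : ℚ) / 2⌉) := by rw [sum_sub_distrib]
    _ ≤ ∑ s, m s ^ 2 := sum_le_sum fun s _ => mul_sub_floor_mul_ceil_le _ _

lemma phat_oddDual_sub_eq_sum_sq (hp : Supermodular p) (h0 : p ∅ = 0) (hm : m ∈ Bdot p)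
    (hmin : ∀ m' ∈ Bdot p, ∑ x, m x ^ 2 ≤ ∑ x, m' x ^ 2) {σ : Fin (Fintype.card α) ≃ α}
    (hσ : Antitone (oddDual p m ∘ σ)) :
    phat p (oddDual p m) σ - ∑ s, ⌊(oddDual p m s : ℚ) / 2⌋ * ⌈(oddDual p m s : ℚ) / 2⌉ =
      ∑ s, m s ^ 2 := by
  have htight : ∀ j, gap (oddDual p m ∘ σ) j ≠ 0 → Tight p m (prefixSet σ j) := by
    intro j hj
    obtain ⟨θ, hθ⟩ := odd_oddDual (p := p) (m := m) (σ j)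
    rw [prefixSet_eq_filter_of_gap_ne_zero hσ hj, hθ, filter_le_oddDual hm hmin]
    exact tight_upperTight hp h0 hm θ
  rw [phat_eq_sum_mul htight, ← sum_sub_distrib]
  exact sum_congr rfl fun s _ => mul_sub_floor_mul_ceil_eq (oddDual_eq_or s)

end Duality

lemma exists_antitone_comp_equiv [Fintype α] {β : Type*} [LinearOrder β] (f : α → β) :
    ∃ σ : Fin (Fintype.card α) ≃ α, Antitone (f ∘ σ) :=
  let e := (Fintype.equivFin α).symm
  ⟨(Tuple.sort (OrderDual.toDual ∘ f ∘ e)).trans e,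
    monotone_toDual_comp_iff.1 (Tuple.monotone_sort (OrderDual.toDual ∘ f ∘ e))⟩

lemma exists_forall_sum_sq_le [Fintype α] {S : Set (α → ℤ)} (hS : S.Nonempty) :
    ∃ m ∈ S, ∀ m' ∈ S, ∑ x, m x ^ 2 ≤ ∑ x, m' x ^ 2 := by
  obtain ⟨m₀, hm₀⟩ := hS
  obtain ⟨_, ⟨m, hm, rfl⟩, hmin⟩ := Int.exists_least_of_bdd
    (P := fun w => ∃ m ∈ S, w = ∑ x, m x ^ 2)
    ⟨0, by rintro _ ⟨m, -, rfl⟩; positivity⟩ ⟨_, m₀, hm₀, rfl⟩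
  exact ⟨m, hm, fun m' hm' => hmin _ ⟨m', hm', rfl⟩⟩

theorem stmt16_general [Fintype α] [DecidableEq α]
    (p : Finset α → ℤ) (hp : Supermodular p) (h0 : p ∅ = 0)
    (hne : (Bdot p).Nonempty) :
    ∃ v : ℤ,
      IsLeast {w : ℤ | ∃ m ∈ Bdot p, w = ∑ s : α, (m s) ^ 2} v ∧
      IsGreatest {w : ℤ | ∃ (π : α → ℤ) (σ : Fin (Fintype.card α) ≃ α),
        (∀ i j : Fin (Fintype.card α), i ≤ j → π (σ j) ≤ π (σ i)) ∧
        w = phat p π σ - ∑ s : α, ⌊(π s : ℚ) / 2⌋ * ⌈(π s : ℚ) / 2⌉} v ∧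
      ∃ (π : α → ℤ) (σ : Fin (Fintype.card α) ≃ α),
        (∀ i j : Fin (Fintype.card α), i ≤ j → π (σ j) ≤ π (σ i)) ∧
        (∀ s : α, Odd (π s)) ∧
        v = phat p π σ - ∑ s : α, ⌊(π s : ℚ) / 2⌋ * ⌈(π s : ℚ) / 2⌉ := by
  obtain ⟨m, hm, hmin⟩ := exists_forall_sum_sq_le hne
  obtain ⟨σ, hσ⟩ := exists_antitone_comp_equiv (oddDual p m)
  have hdual := phat_oddDual_sub_eq_sum_sq hp h0 hm hmin hσ
  refine ⟨∑ s, m s ^ 2, ⟨⟨m, hm, rfl⟩, ?_⟩, ⟨⟨oddDual p m, σ, fun _ _ h => hσ h, hdual.symm⟩, ?_⟩,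
    oddDual p m, σ, fun _ _ h => hσ h, odd_oddDual, hdual.symm⟩
  · rintro _ ⟨m', hm', rfl⟩
    exact hmin m' hm'
  · rintro _ ⟨π, τ, hτ, rfl⟩
    exact phat_sub_le_sum_sq hm fun _ _ h => hτ _ _ h

/-- Min-max theorem for the integral square-sum over `Ḃ(p)`, together with the
existence of an odd dual optimizer. -/
theorem stmt16 [Fintype α] [DecidableEq α] [Nonempty α]
    (p : Finset α → ℤ) (hp : Supermodular p) (h0 : p ∅ = 0)
    (hne : (Bdot p).Nonempty) :
    ∃ v : ℤ,
      IsLeast {w : ℤ | ∃ m ∈ Bdot p, w = ∑ s : α, (m s) ^ 2} v ∧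
      IsGreatest {w : ℤ | ∃ (π : α → ℤ) (σ : Fin (Fintype.card α) ≃ α),
        (∀ i j : Fin (Fintype.card α), i ≤ j → π (σ j) ≤ π (σ i)) ∧
        w = phat p π σ - ∑ s : α, ⌊(π s : ℚ) / 2⌋ * ⌈(π s : ℚ) / 2⌉} v ∧
      ∃ (π : α → ℤ) (σ : Fin (Fintype.card α) ≃ α),
        (∀ i j : Fin (Fintype.card α), i ≤ j → π (σ j) ≤ π (σ i)) ∧
        (∀ s : α, Odd (π s)) ∧
        v = phat p π σ - ∑ s : α, ⌊(π s : ℚ) / 2⌋ * ⌈(π s : ℚ) / 2⌉ :=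
  stmt16_general p hp h0 hne
end

section
/- Let S be a nonempty finite set, p a set-function assigning an integer to every subset of S, and b a set-function assigning a nonnegative integer to every subset of S. Suppose integers μ < μ′ and subsets X, X′ ⊆ S satisfy: (i) p(X) − μ·b(X) ≥ p(Y) − μ·b(Y) for every Y ⊆ S (X maximizes p − μ·b); (ii) b(X) > 0 and μ′ = ⌈p(X)/b(X)⌉; (iii) p(X′) − μ′·b(X′) > 0. Then b(X′) < b(X). -/
theorem lt_of_forall_sub_mul_le {ι R : Type*} [CommRing R] [LinearOrder R] [IsStrictOrderedRing R]
    {p b : ι → R} {μ μ' : R} {X X' : ι} (hμ : μ < μ')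
    (hmax : ∀ Y, p Y - μ * b Y ≤ p X - μ * b X) (hX : p X ≤ μ' * b X)
    (hX' : 0 < p X' - μ' * b X') :
    b X' < b X := by
  have key : (μ' - μ) * b X' < (μ' - μ) * b X :=
    calc (μ' - μ) * b X' < p X' - μ * b X' := by linarith
      _ ≤ p X - μ * b X := hmax X'
      _ ≤ (μ' - μ) * b X := by linarith
  exact lt_of_mul_lt_mul_left key (sub_nonneg.mpr hμ.le)

theorem Int.le_ceil_div_mul (a : ℤ) {b : ℤ} (hb : 0 < b) : a ≤ ⌈(a : ℚ) / b⌉ * b := by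
  have hbQ : (0 : ℚ) < b := by exact_mod_cast hb
  exact_mod_cast (div_le_iff₀ hbQ).mp (Int.le_ceil ((a : ℚ) / b))

theorem stmt17_general {α : Type*}
    (p b : Finset α → ℤ)
    (μ μ' : ℤ) (hμ : μ < μ')
    (X X' : Finset α)
    (hmax : ∀ Y : Finset α, p Y - μ * b Y ≤ p X - μ * b X)
    (hbX : 0 < b X)
    (hμ' : μ' = ⌈(p X : ℚ) / (b X : ℚ)⌉)
    (hX' : 0 < p X' - μ' * b X') :
    b X' < b X :=
  lt_of_forall_sub_mul_le hμ hmax (hμ' ▸ Int.le_ceil_div_mul (p X) hbX) hX'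

/-- Key lemma for the Newton–Dinkelbach algorithm maximizing `⌈p(X)/b(X)⌉`:
if `X` maximizes `p − μ·b`, `b(X) > 0`, `μ′ = ⌈p(X)/b(X)⌉ > μ`, and
`p(X′) − μ′·b(X′) > 0`, then `b(X′) < b(X)`. -/
theorem stmt17 {α : Type*} [Fintype α] [Nonempty α]
    (p b : Finset α → ℤ) (hb : ∀ Y : Finset α, 0 ≤ b Y)
    (μ μ' : ℤ) (hμ : μ < μ')
    (X X' : Finset α)
    (hmax : ∀ Y : Finset α, p Y - μ * b Y ≤ p X - μ * b X)
    (hbX : 0 < b X)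
    (hμ' : μ' = ⌈(p X : ℚ) / (b X : ℚ)⌉)
    (hX' : 0 < p X' - μ' * b X') :
    b X' < b X :=
  stmt17_general p b μ μ' hμ X X' hmax hbX hμ' hX'
end
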